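/- Let α_N, N ∈ ℕ, be positive integers with ∑_{n=α_N}^∞ n^{1+n/2}·N^n/n! < 1/N, and let f(z) = ∑_{n∈B} c_n z^n/n! with 0 ≤ c_n ≤ n, where B ⊆ ℕ satisfies B ∩ [α_N, 2α_N²) = ∅ for all N. Then for every m ∈ ℕ and ε > 0, there exists j₀ such that for all j with α_N ≤ j ≤ α_N² for some N ≥ max(m, ⌈1/ε⌉), sup_{|z|≤m}|f^{(j)}(z)| < ε. -/

import Mathlib

/-!
Writing `f = ∑ aₙ zⁿ / n!` with `aₙ = cₙ 1_B(n)`, termwise differentiation gives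
`f⁽ʲ⁾(z) = ∑ a_{n+j} zⁿ / n!`. If `α_N ≤ j ≤ α_N²`, every index `ν = n + j ∈ B` lies beyond the gap,
so `ν ≥ 2α_N² ≥ 2j`, hence `ν! / n! ≤ ν^j ≤ ν^{ν/2}`, and for `|z| ≤ m ≤ N` the `n`-th term is at
most `ν^{1+ν/2} N^ν / ν!`. Summing over `ν ≥ α_N` bounds `|f⁽ʲ⁾(z)|` by the hypothesis series,
which is `< 1/N ≤ ε`.
-/

open Filter Metric

/-- The sup of `‖f‖` over the closed ball of radius `m` centered at `0`. -/
noncomputable def supD (f : ℂ → ℂ) (m : ℝ) : ℝ :=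
  sSup ((fun z => ‖f z‖) '' Metric.closedBall (0:ℂ) m)

open scoped Nat

noncomputable def egf (a : ℕ → ℂ) (z : ℂ) : ℂ :=
  ∑' n, a n * z ^ n / n !

section egf

variable {a : ℕ → ℂ} {C K : ℝ}

lemma summable_mul_pow_div_factorial (C x : ℝ) : Summable fun n : ℕ => C * x ^ n / n ! := by
  simpa only [mul_div_assoc] using (Real.summable_pow_div_factorial x).mul_left C

lemma norm_egf_term_le (ha : ∀ n, ‖a n‖ ≤ C * K ^ n) (n : ℕ) (z : ℂ) :
    ‖a n * z ^ n / (n ! : ℂ)‖ ≤ C * (K * ‖z‖) ^ n / n ! := by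
  rw [norm_div, norm_mul, norm_pow, Complex.norm_natCast, mul_pow, ← mul_assoc]
  gcongr
  exact ha n

lemma summable_norm_egf_term (ha : ∀ n, ‖a n‖ ≤ C * K ^ n) (z : ℂ) :
    Summable fun n => ‖a n * z ^ n / (n ! : ℂ)‖ :=
  .of_nonneg_of_le (fun _ => norm_nonneg _) (norm_egf_term_le ha · z)
    (summable_mul_pow_div_factorial _ _)

lemma hasDerivAt_egf (ha : ∀ n, ‖a n‖ ≤ C * K ^ n) (z : ℂ) :
    HasDerivAt (egf a) (egf (fun n => a (n + 1)) z) z := by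
  set R := ‖z‖ + 1
  have hR : 1 ≤ R := by simp [R]
  have hderiv (n : ℕ) (w : ℂ) :
      HasDerivAt (fun w => a n * w ^ n / n !) (a n * (n * w ^ (n - 1)) / n !) w :=
    ((hasDerivAt_pow n w).const_mul _).div_const _
  have hbound (n : ℕ) (w : ℂ) (hw : w ∈ ball (0 : ℂ) R) :
      ‖a n * (n * w ^ (n - 1)) / (n ! : ℂ)‖ ≤ C * (K * (2 * R)) ^ n / n ! := by
    have hwR : ‖w‖ ≤ R := by simpa using (mem_ball_zero_iff.mp hw).le
    have hn : (n : ℝ) * ‖w‖ ^ (n - 1) ≤ (2 * R) ^ n := calc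
      (n : ℝ) * ‖w‖ ^ (n - 1) ≤ 2 ^ n * R ^ n := by
        gcongr
        · exact_mod_cast n.lt_two_pow_self.le
        · exact (pow_le_pow_left₀ (norm_nonneg w) hwR _).trans (pow_le_pow_right₀ hR (n.sub_le 1))
      _ = (2 * R) ^ n := (mul_pow _ _ _).symm
    rw [norm_div, norm_mul, norm_mul, norm_pow, Complex.norm_natCast, Complex.norm_natCast,
      mul_pow, ← mul_assoc C]
    exact div_le_div_of_nonneg_right
      (mul_le_mul (ha n) hn (by positivity) ((norm_nonneg _).trans (ha n))) (by positivity)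
  have hz : z ∈ ball (0 : ℂ) R := by simp [R]
  have H := hasDerivAt_tsum_of_isPreconnected (summable_mul_pow_div_factorial _ _) isOpen_ball
    (convex_ball _ _).isPreconnected (fun n w _ => hderiv n w) hbound hz
    (summable_norm_egf_term ha z).of_norm hz
  have hsum' : Summable fun n => a n * (n * z ^ (n - 1)) / (n ! : ℂ) :=
    .of_norm_bounded (summable_mul_pow_div_factorial _ _) (hbound · z hz)
  refine H.congr_deriv ?_
  rw [hsum'.tsum_eq_zero_add]
  simp only [CharP.cast_eq_zero, zero_mul, mul_zero, zero_div, zero_add, egf]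
  refine tsum_congr fun n => ?_
  rw [Nat.add_sub_cancel, Nat.factorial_succ]
  push_cast
  field_simp

lemma iteratedDeriv_egf (ha : ∀ n, ‖a n‖ ≤ C * K ^ n) (j : ℕ) :
    iteratedDeriv j (egf a) = egf (fun n => a (n + j)) := by
  induction j generalizing a C with
  | zero => simp
  | succ j ih =>
    have hderiv : deriv (egf a) = egf (fun n => a (n + 1)) :=
      funext fun z => (hasDerivAt_egf ha z).deriv
    have ha' (n : ℕ) : ‖a (n + 1)‖ ≤ C * K * K ^ n := by simpa [pow_succ', mul_assoc] using ha (n + 1)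
    simp only [iteratedDeriv_succ', hderiv, ih ha', add_assoc]

end egf

noncomputable def majorant (X : ℝ) (ν : ℕ) : ℝ :=
  (ν : ℝ) ^ (1 + (ν : ℝ) / 2) * X ^ ν / ν !

lemma rpow_natCast_div_two {x : ℝ} (hx : 0 ≤ x) (n : ℕ) : x ^ ((n : ℝ) / 2) = √x ^ n := by
  rw [Real.sqrt_eq_rpow, ← Real.rpow_natCast, ← Real.rpow_mul hx]
  ring_nf

lemma majorant_eq (X : ℝ) (ν : ℕ) : majorant X ν = ν * √ν ^ ν * X ^ ν / ν ! := by
  rcases ν.eq_zero_or_pos with rfl | hν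
  · simp [majorant]
  · rw [majorant, Real.rpow_add (by positivity), Real.rpow_one, rpow_natCast_div_two (Nat.cast_nonneg _)]

lemma majorant_nonneg {X : ℝ} (hX : 0 ≤ X) (ν : ℕ) : 0 ≤ majorant X ν := by
  unfold majorant; positivity

-- `ν ^ ν ≤ e ^ ν ν!` turns the term into `ν (e |X| / √ν) ^ ν`, eventually below `ν / 2 ^ ν`
lemma summable_majorant (X : ℝ) : Summable (majorant X) := by
  have hgeom : Summable fun ν : ℕ => (ν : ℝ) * (1 / 2) ^ ν := by
    simpa using summable_pow_mul_geometric_of_norm_lt_one (R := ℝ) 1 (r := 1 / 2) (by norm_num)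
  refine .of_norm_bounded_eventually_nat hgeom ?_
  have hsqrt : Tendsto (fun ν : ℕ => √(ν : ℝ)) atTop atTop :=
    Real.tendsto_sqrt_atTop.comp tendsto_natCast_atTop_atTop
  filter_upwards [hsqrt.eventually_ge_atTop (max (2 * Real.exp 1 * |X|) 1)] with ν hν
  set s := √(ν : ℝ)
  have hs : 0 < s := one_pos.trans_le (le_of_max_le_right hν)
  have hfact : s ^ ν * s ^ ν ≤ Real.exp 1 ^ ν * ν ! := by
    have := Real.pow_div_factorial_le_exp (ν : ℝ) (Nat.cast_nonneg ν) ν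
    rw [div_le_iff₀ (by positivity), ← Real.exp_one_pow] at this
    rwa [← mul_pow, Real.mul_self_sqrt (Nat.cast_nonneg _)]
  have hratio : Real.exp 1 * |X| / s ≤ 1 / 2 := by
    rw [div_le_iff₀ hs]; linarith [le_of_max_le_left hν]
  calc ‖majorant X ν‖ = ν * s ^ ν * |X| ^ ν / ν ! := by
        rw [majorant_eq, Real.norm_eq_abs, abs_div, abs_mul, abs_mul, abs_pow, Nat.abs_cast,
          Nat.abs_cast, abs_pow, abs_of_pos hs]
    _ = ν * |X| ^ ν * (s ^ ν / ν !) := by ring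
    _ ≤ ν * |X| ^ ν * (Real.exp 1 ^ ν / s ^ ν) := by
        gcongr ν * |X| ^ ν * ?_
        rwa [div_le_div_iff₀ (by positivity) (by positivity)]
    _ = ν * (Real.exp 1 * |X| / s) ^ ν := by ring
    _ ≤ ν * (1 / 2) ^ ν := by gcongr

lemma pow_le_sqrt_pow {ν j : ℕ} (h : 2 * j ≤ ν) : (ν : ℝ) ^ j ≤ √ν ^ ν := by
  rcases ν.eq_zero_or_pos with rfl | hν
  · obtain rfl : j = 0 := by omega
    simp
  · calc (ν : ℝ) ^ j = √ν ^ (2 * j) := by rw [pow_mul, Real.sq_sqrt (Nat.cast_nonneg _)]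
      _ ≤ √ν ^ ν := pow_le_pow_right₀ (Real.one_le_sqrt.mpr (by exact_mod_cast hν)) h

lemma div_factorial_le_majorant {n j : ℕ} (hjn : j ≤ n) {X : ℝ} (hX : 1 ≤ X) :
    ((n + j : ℕ) : ℝ) * X ^ n / n ! ≤ majorant X (n + j) := by
  set ν := n + j
  have hfact : (ν ! : ℝ) = n ! * (n + 1).ascFactorial j := by
    exact_mod_cast (n.factorial_mul_ascFactorial j).symm
  have hasc_pos : (0 : ℝ) < (n + 1).ascFactorial j := by exact_mod_cast Nat.ascFactorial_pos _ _
  have hasc : ((n + 1).ascFactorial j : ℝ) ≤ √ν ^ ν := calc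
    ((n + 1).ascFactorial j : ℝ) ≤ (ν : ℝ) ^ j := by exact_mod_cast n.ascFactorial_le_pow_add j
    _ ≤ √ν ^ ν := pow_le_sqrt_pow (by omega)
  rw [majorant_eq, hfact]
  calc (ν : ℝ) * X ^ n / n ! ≤ ν * X ^ ν / n ! := by gcongr; omega
    _ = ν * X ^ ν * (n + 1).ascFactorial j / (n ! * (n + 1).ascFactorial j) := by field_simp
    _ ≤ ν * X ^ ν * √ν ^ ν / (n ! * (n + 1).ascFactorial j) := by gcongr
    _ = ν * √ν ^ ν * X ^ ν / (n ! * (n + 1).ascFactorial j) := by ring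

lemma norm_egf_shift_le_tsum_majorant {a : ℕ → ℂ} (ha : ∀ n, ‖a n‖ ≤ n) {j k : ℕ} (hkj : k ≤ j)
    (hgap : ∀ n, a (n + j) ≠ 0 → j ≤ n) {X : ℝ} (hX : 1 ≤ X) {z : ℂ} (hz : ‖z‖ ≤ X) :
    ‖egf (fun n => a (n + j)) z‖ ≤ ∑' n, majorant X (n + k) := by
  have hterm (n : ℕ) : ‖a (n + j) * z ^ n / (n ! : ℂ)‖ ≤ majorant X (n + j) := by
    by_cases h : a (n + j) = 0
    · simpa [h] using majorant_nonneg (zero_le_one.trans hX) _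
    calc ‖a (n + j) * z ^ n / (n ! : ℂ)‖ ≤ ((n + j : ℕ) : ℝ) * X ^ n / n ! := by
          rw [norm_div, norm_mul, norm_pow, Complex.norm_natCast]
          gcongr
          exact ha _
      _ ≤ majorant X (n + j) := div_factorial_le_majorant (hgap n h) hX
  have hsum : Summable fun n => ‖a (n + j) * z ^ n / (n ! : ℂ)‖ :=
    .of_nonneg_of_le (fun _ => norm_nonneg _) hterm
      ((summable_nat_add_iff j).mpr (summable_majorant X))
  calc ‖egf (fun n => a (n + j)) z‖ ≤ ∑' n, ‖a (n + j) * z ^ n / (n ! : ℂ)‖ :=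
        norm_tsum_le_tsum_norm hsum
    _ ≤ ∑' n, majorant X (n + k) :=
        hsum.tsum_le_tsum_of_inj (· + (j - k)) (add_left_injective _)
          (fun _ _ => majorant_nonneg (zero_le_one.trans hX) _)
          (fun n => by simpa only [show n + (j - k) + k = n + j by omega] using hterm n)
          ((summable_nat_add_iff k).mpr (summable_majorant X))

open scoped Classical in
theorem stmt19_general (α : ℕ → ℕ)
    (hsum : ∀ N : ℕ, 1 ≤ N →
      ∑' n : ℕ, ((n + α N : ℕ) : ℝ) ^ (1 + ((n + α N : ℕ) : ℝ) / 2) * (N : ℝ) ^ (n + α N)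
          / ((n + α N).factorial : ℝ) < 1 / N)
    (c : ℕ → ℝ) (hc : ∀ n, 0 ≤ c n ∧ c n ≤ n)
    (B : Set ℕ) (hBgap : ∀ N : ℕ, 1 ≤ N → ∀ n ∈ B, ¬ (α N ≤ n ∧ n < 2 * (α N) ^ 2))
    (f : ℂ → ℂ)
    (hf : ∀ z : ℂ, HasSum (fun n : ℕ =>
      (if n ∈ B then ((c n : ℝ) : ℂ) else 0) * z ^ n / (n.factorial : ℂ)) (f z)) :
    ∀ m : ℕ, ∀ ε : ℝ, 0 < ε → ∃ j₀ : ℕ, ∀ j : ℕ, j₀ ≤ j →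
      (∃ N : ℕ, max m ⌈1 / ε⌉₊ ≤ N ∧ α N ≤ j ∧ j ≤ (α N) ^ 2) →
      supD (iteratedDeriv j f) m < ε := by
  intro m ε hε
  refine ⟨0, fun j _ ⟨N, hN, hαj, hjα⟩ => ?_⟩
  set a : ℕ → ℂ := fun n => if n ∈ B then ((c n : ℝ) : ℂ) else 0
  have ha (n : ℕ) : ‖a n‖ ≤ n := by
    by_cases hn : n ∈ B <;> simp [a, hn, abs_of_nonneg (hc n).1, (hc n).2]
  have hεN : 1 / ε ≤ N := (Nat.le_ceil _).trans (by exact_mod_cast le_of_max_le_right hN)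
  have hN1 : 1 ≤ N := by exact_mod_cast (one_div_pos.mpr hε).trans_le hεN
  have hgap (n : ℕ) (hn : a (n + j) ≠ 0) : j ≤ n := by
    have hB : n + j ∈ B := by by_contra h; simp [a, h] at hn
    have := hBgap N hN1 _ hB
    generalize α N ^ 2 = q at *
    omega
  have hiter : iteratedDeriv j f = egf (fun n => a (n + j)) := by
    rw [show f = egf a from funext fun z => (hf z).tsum_eq.symm]
    refine iteratedDeriv_egf (C := 1) (K := 2) (fun n => ?_) j
    simpa using (ha n).trans (by exact_mod_cast n.lt_two_pow_self.le)
  have hbound (z : ℂ) (hz : z ∈ closedBall (0 : ℂ) m) :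
      ‖iteratedDeriv j f z‖ ≤ ∑' n, majorant N (n + α N) :=
    hiter ▸ norm_egf_shift_le_tsum_majorant ha hαj hgap (by exact_mod_cast hN1)
      ((mem_closedBall_zero_iff.mp hz).trans (by exact_mod_cast le_of_max_le_left hN))
  calc supD (iteratedDeriv j f) m ≤ ∑' n, majorant N (n + α N) :=
        Real.sSup_le (by rintro _ ⟨z, hz, rfl⟩; exact hbound z hz)
          (tsum_nonneg fun _ => majorant_nonneg (Nat.cast_nonneg N) _)
    _ < 1 / N := hsum N hN1
    _ ≤ ε := by rwa [div_le_comm₀ (by positivity) hε]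

open scoped Classical in
theorem stmt19 (α : ℕ → ℕ) (hαpos : ∀ N, 0 < α N)
    (hsum : ∀ N : ℕ, 1 ≤ N →
      ∑' n : ℕ, ((n + α N : ℕ) : ℝ) ^ (1 + ((n + α N : ℕ) : ℝ) / 2) * (N : ℝ) ^ (n + α N)
          / ((n + α N).factorial : ℝ) < 1 / N)
    (c : ℕ → ℝ) (hc : ∀ n, 0 ≤ c n ∧ c n ≤ n)
    (B : Set ℕ) (hBgap : ∀ N : ℕ, 1 ≤ N → ∀ n ∈ B, ¬ (α N ≤ n ∧ n < 2 * (α N) ^ 2))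
    (f : ℂ → ℂ)
    (hf : ∀ z : ℂ, HasSum (fun n : ℕ =>
      (if n ∈ B then ((c n : ℝ) : ℂ) else 0) * z ^ n / (n.factorial : ℂ)) (f z)) :
    ∀ m : ℕ, ∀ ε : ℝ, 0 < ε → ∃ j₀ : ℕ, ∀ j : ℕ, j₀ ≤ j →
      (∃ N : ℕ, max m ⌈1 / ε⌉₊ ≤ N ∧ α N ≤ j ∧ j ≤ (α N) ^ 2) →
      supD (iteratedDeriv j f) m < ε :=
  stmt19_general α hsum c hc B hBgap f hf
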